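/- arXiv:1210.7044 — 2 statements merged into one kernel-verified Lean document; each statement's English description precedes it below -/
import Mathlib

section
/- In Λ = ℤ[i, (1+√5)/2] ⊕ ℤ[i, (1+√5)/2]z with z² = i and zk = σ(k)z (σ the nontrivial automorphism of ℚ(i,√5)/ℚ(i)), the quotient Λ/(1+i)Λ is isomorphic to M₂(𝔽₂). -/
abbrev M2 : Type := Matrix (Fin 2) (Fin 2) (ZMod 2)
def Wm : M2 := !![0,1;1,1]
def Fm : M2 := !![1,1;0,1]

lemma coeff_zero (x y : ZMod 2) (h : x • (1:M2) + y • Wm = 0) : x = 0 ∧ y = 0 := by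
  revert h; revert x y; decide

lemma FmFm : Fm * Fm = 1 := by decide

lemma ker_split : ∀ x y u v : ZMod 2,
    (x • (1:M2) + y • Wm) + (u • (1:M2) + v • Wm) * Fm = 0 →
    (x • (1:M2) + y • Wm) = 0 ∧ (u • (1:M2) + v • Wm) = 0 := by decide

lemma m2_decomp : ∀ m : M2, ∃ x y u v : ZMod 2,
    m = (x • (1:M2) + y • Wm) + (u • (1:M2) + v • Wm) * Fm := by decide

lemma mat_identity {R : Type*} [Ring R] (F A0 A1 B0 B1 : R) (hF : F * F = 1) :
    A0 * B0 + A1 * (F * B1 * F) + (A0 * B1 + A1 * (F * B0 * F)) * F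
      = (A0 + A1 * F) * (B0 + B1 * F) := by
  have h2 : F * B0 * F * F = F * B0 := by rw [mul_assoc, hF, mul_one]
  rw [add_mul (A0 * B1), mul_assoc A1 _ F, h2]
  noncomm_ring

lemma val_intCast : ∀ t : ZMod 2, ((t.val : ℤ) : ZMod 2) = t := by decide


set_option maxHeartbeats 2000000 in
/-- In `Λ = ℤ[i, (1+√5)/2] ⊕ ℤ[i, (1+√5)/2] z` with `z² = i` and `z k = σ(k) z`
(`σ` the nontrivial automorphism of `ℚ(i, √5)/ℚ(i)`), the quotient `Λ/(1+i)Λ` is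
isomorphic to `M₂(𝔽₂)`. -/
theorem stmt_12
    -- `K = ℚ(i, √5)`
    (K : Type*) [Field K] [Algebra ℚ K]
    (i sq5 : K) (hi : i ^ 2 = -1) (h5 : sq5 ^ 2 = 5)
    (hgen : Algebra.adjoin ℚ ({i, sq5} : Set K) = ⊤)
    -- `σ` is the nontrivial automorphism of `K/ℚ(i)`
    (σ : K ≃+* K) (hσi : σ i = i) (hσ5 : σ sq5 = -sq5)
    -- `O = ℤ[i, (1+√5)/2]`, the ring of integers of `K`
    (O : Subalgebra ℤ K) (hO : O = Algebra.adjoin ℤ ({i, (1 + sq5) / 2} : Set K))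
    (σO : O →+* O) (hσO : ∀ x : O, ((σO x : K)) = σ (x : K))
    (iO : O) (hiO : (iO : K) = i)
    (p : O) (hp : (p : K) = 1 + i)
    -- the natural order `Λ = O ⊕ O z`, `z² = i`
    (Λ : Type*) [Ring Λ] (ι : O →+* Λ) (hι : Function.Injective ι) (z : Λ)
    (hcomm : ∀ k : O, z * ι k = ι (σO k) * z)
    (hz2 : z ^ 2 = ι iO)
    (hfree : ∀ a : Λ, ∃! c : Fin 2 → O, a = ι (c 0) + ι (c 1) * z) :
    Nonempty
      ((TwoSidedIdeal.span {ι p}).ringCon.Quotient ≃+* Matrix (Fin 2) (Fin 2) (ZMod 2)) := by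
  have halg : Function.Injective (algebraMap ℚ K) := (algebraMap ℚ K).injective
  haveI : CharZero K := charZero_of_injective_algebraMap halg
  obtain ⟨ω, hω⟩ : ∃ w : K, (1 + sq5) / 2 = w := ⟨_, rfl⟩
  have hs0 : sq5 ≠ 0 := by
    intro h
    rw [h] at h5
    norm_num at h5
  -- 1, i independent over ℚ
  have h1i : ∀ a b : ℚ, (a : K) + (b : K) * i = 0 → a = 0 ∧ b = 0 := by
    intro a b hab
    have hK : ((a ^ 2 + b ^ 2 : ℚ) : K) = 0 := by
      push_cast
      linear_combination ((a : K) - (b : K) * i) * hab + (b : K) ^ 2 * hi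
    have hQ : (a ^ 2 + b ^ 2 : ℚ) = 0 := by exact_mod_cast hK
    constructor <;> nlinarith [sq_nonneg a, sq_nonneg b]
  have hσQ : ∀ q : ℚ, σ (q : K) = (q : K) := fun q => map_ratCast σ.toRingHom q
  -- full independence
  have hind : ∀ a b c d : ℚ, (a : K) + (b : K) * i + (c : K) * sq5 + (d : K) * (i * sq5) = 0 →
      a = 0 ∧ b = 0 ∧ c = 0 ∧ d = 0 := by
    intro a b c d h
    have h2 : (a : K) + (b : K) * i - (c : K) * sq5 - (d : K) * (i * sq5) = 0 := by
      have := congrArg σ h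
      simp only [map_add, map_mul, hσi, hσ5, hσQ, map_zero] at this
      linear_combination this
    have hcd : (c : K) + (d : K) * i = 0 := by
      have hsum : ((c : K) + (d : K) * i) * sq5 = 0 := by linear_combination (h - h2) / 2
      rcases mul_eq_zero.mp hsum with h' | h'
      · exact h'
      · exact absurd h' hs0
    obtain ⟨hc, hd⟩ := h1i c d hcd
    have hab : (a : K) + (b : K) * i = 0 := by
      subst hc hd
      push_cast at h
      linear_combination h
    obtain ⟨ha, hb⟩ := h1i a b hab
    exact ⟨ha, hb, hc, hd⟩
  -- independence of 1, i, ω, iω over ℚ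
  have hliQ : LinearIndependent ℚ ![(1 : K), i, ω, i * ω] := by
    rw [Fintype.linearIndependent_iff]
    intro g hg
    have hg' : ((g 0 + g 2 / 2 : ℚ) : K) + ((g 1 + g 3 / 2 : ℚ) : K) * i
        + ((g 2 / 2 : ℚ) : K) * sq5 + ((g 3 / 2 : ℚ) : K) * (i * sq5) = 0 := by
      simp only [Fin.sum_univ_four, Matrix.cons_val_zero, Matrix.cons_val_one, Matrix.head_cons,
        Matrix.cons_val_two, Matrix.tail_cons, Matrix.cons_val_three] at hg
      rw [← hω] at hg
      push_cast
      rw [Algebra.smul_def, Algebra.smul_def, Algebra.smul_def, Algebra.smul_def] at hg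
      simp only [eq_ratCast] at hg
      push_cast at hg
      linear_combination hg
    obtain ⟨h0, h1, h2, h3⟩ := hind _ _ _ _ hg'
    intro j
    have h2' : g 2 = 0 := by linarith
    have h3' : g 3 = 0 := by linarith
    have h0' : g 0 = 0 := by linarith
    have h1' : g 1 = 0 := by linarith
    fin_cases j <;> assumption
  -- basic identities
  have hii : i * i = -1 := by rw [← sq]; exact hi
  have h2ω : 2 * ω = 1 + sq5 := by
    rw [← hω]; field_simp
  have hω2 : ω * ω = 1 + ω := by
    have h4 : (4 : K) ≠ 0 := by norm_num
    apply mul_left_cancel₀ h4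
    linear_combination (2 * ω + 1 + sq5) * h2ω + h5 - 2 * h2ω
  -- membership in O
  have hiO' : i ∈ O := by
    rw [hO]; exact Algebra.subset_adjoin (Set.mem_insert _ _)
  have hωO : ω ∈ O := by
    rw [hO, ← hω]; exact Algebra.subset_adjoin (Set.mem_insert_of_mem _ rfl)
  have h1O : (1 : K) ∈ O := O.one_mem
  have hiωO : i * ω ∈ O := O.mul_mem hiO' hωO
  -- the vector of basis elements
  set v : Fin 4 → K := ![(1 : K), i, ω, i * ω] with hv
  have hv0 : v 0 = 1 := rfl
  have hv1 : v 1 = i := rfl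
  have hv2 : v 2 = ω := rfl
  have hv3 : v 3 = i * ω := rfl
  set sp : Submodule ℤ K := Submodule.span ℤ (Set.range v) with hsp
  have hm : ∀ j : Fin 4, v j ∈ sp := fun j => Submodule.subset_span ⟨j, rfl⟩
  have hm1 : (1 : K) ∈ sp := hv0 ▸ hm 0
  have hmi : i ∈ sp := hv1 ▸ hm 1
  have hmω : ω ∈ sp := hv2 ▸ hm 2
  have hmiω : i * ω ∈ sp := hv3 ▸ hm 3
  have hmul : ∀ j k : Fin 4, v j * v k ∈ sp := by
    intro j k
    fin_cases j <;> fin_cases k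
    · show v 0 * v 0 ∈ sp; rw [hv0, one_mul]; exact hm 0
    · show v 0 * v 1 ∈ sp; rw [hv0, one_mul]; exact hm 1
    · show v 0 * v 2 ∈ sp; rw [hv0, one_mul]; exact hm 2
    · show v 0 * v 3 ∈ sp; rw [hv0, one_mul]; exact hm 3
    · show v 1 * v 0 ∈ sp; rw [hv0, mul_one]; exact hm 1
    · show v 1 * v 1 ∈ sp; rw [hv1, hii]; exact sp.neg_mem hm1
    · show v 1 * v 2 ∈ sp; rw [hv1, hv2]; exact hmiω
    · show v 1 * v 3 ∈ sp
      rw [hv1, hv3, show i * (i * ω) = -ω from by linear_combination ω * hii]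
      exact sp.neg_mem hmω
    · show v 2 * v 0 ∈ sp; rw [hv0, mul_one]; exact hm 2
    · show v 2 * v 1 ∈ sp; rw [hv2, hv1, mul_comm]; exact hmiω
    · show v 2 * v 2 ∈ sp; rw [hv2, hω2]; exact sp.add_mem hm1 hmω
    · show v 2 * v 3 ∈ sp
      rw [hv2, hv3, show ω * (i * ω) = i + i * ω from by linear_combination i * hω2]
      exact sp.add_mem hmi hmiω
    · show v 3 * v 0 ∈ sp; rw [hv0, mul_one]; exact hm 3
    · show v 3 * v 1 ∈ sp
      rw [hv3, hv1, show i * ω * i = -ω from by linear_combination ω * hii]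
      exact sp.neg_mem hmω
    · show v 3 * v 2 ∈ sp
      rw [hv3, hv2, show i * ω * ω = i + i * ω from by linear_combination i * hω2]
      exact sp.add_mem hmi hmiω
    · show v 3 * v 3 ∈ sp
      rw [hv3, show i * ω * (i * ω) = -1 - ω from by
        linear_combination (ω * ω) * hii - hω2]
      exact sp.sub_mem (sp.neg_mem hm1) hmω
  have hclosed : ∀ x ∈ sp, ∀ y ∈ sp, x * y ∈ sp := by
    intro x hx
    induction hx using Submodule.span_induction with
    | mem a ha =>
        rcases ha with ⟨j, rfl⟩
        intro y hy
        induction hy using Submodule.span_induction with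
        | mem b hb => rcases hb with ⟨k, rfl⟩; exact hmul j k
        | zero => rw [mul_zero]; exact sp.zero_mem
        | add b c _ _ hb hc => rw [mul_add]; exact sp.add_mem hb hc
        | smul t b _ hb => rw [mul_smul_comm]; exact sp.smul_mem t hb
    | zero => intro y hy; rw [zero_mul]; exact sp.zero_mem
    | add a b _ _ ha hb => intro y hy; rw [add_mul]; exact sp.add_mem (ha y hy) (hb y hy)
    | smul t a _ ha => intro y hy; rw [smul_mul_assoc]; exact sp.smul_mem t (ha y hy)
  have hadj : ∀ x : K, x ∈ Algebra.adjoin ℤ ({i, (1 + sq5) / 2} : Set K) → x ∈ sp := by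
    intro x hx
    rw [hω] at hx
    induction hx using Algebra.adjoin_induction with
    | mem a ha =>
        rcases ha with h | h
        · rw [h]; exact hmi
        · rw [Set.mem_singleton_iff] at h; rw [h]; exact hmω
    | algebraMap r =>
        have : algebraMap ℤ K r = r • (1 : K) := by rw [Algebra.smul_def, mul_one]
        rw [this]
        exact sp.smul_mem r hm1
    | add a b _ _ ha hb => exact sp.add_mem ha hb
    | mul a b _ _ ha hb => exact hclosed a ha b hb
  have hOsp : ∀ k : O, (k : K) ∈ sp := by
    intro k
    exact hadj _ (by rw [← hO]; exact k.2)
  -- basis of O over ℤ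
  have hinj : Function.Injective fun r : ℤ => r • (1 : ℚ) := by
    intro a b h; simpa using h
  have hliZ : LinearIndependent ℤ v := hliQ.restrict_scalars hinj
  set bO : Fin 4 → O := ![⟨1, h1O⟩, ⟨i, hiO'⟩, ⟨ω, hωO⟩, ⟨i * ω, hiωO⟩] with hbO
  set f : O →ₗ[ℤ] K := (Subalgebra.val O).toLinearMap with hf
  have hfb : ⇑f ∘ bO = v := by
    funext j; fin_cases j <;> rfl
  have hliO : LinearIndependent ℤ bO := by
    apply LinearIndependent.of_comp f
    rw [hfb]; exact hliZ
  have hspO : ⊤ ≤ Submodule.span ℤ (Set.range bO) := by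
    intro k _
    have hk : f k ∈ Submodule.map f (Submodule.span ℤ (Set.range bO)) := by
      rw [Submodule.map_span, ← Set.range_comp, hfb]
      exact hOsp k
    obtain ⟨y, hy, heq⟩ := hk
    have : y = k := Subtype.val_injective heq
    rwa [← this]
  set BO : Module.Basis (Fin 4) ℤ O := Module.Basis.mk hliO hspO with hBO
  have hBOa : ∀ j, BO j = bO j := fun j => by rw [hBO, Module.Basis.mk_apply]
  have hrepr : ∀ j, BO.repr (bO j) = Finsupp.single j 1 := by
    intro j
    rw [← hBOa, BO.repr_self]
  have hbv : ∀ j, ((bO j : O) : K) = v j := by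
    intro j; fin_cases j <;> rfl
  -- O-level product identities
  have hb0 : bO 0 = 1 := by
    apply Subtype.ext; rw [hbv 0, hv0]; rfl
  have hb11 : bO 1 * bO 1 = -bO 0 := by
    apply Subtype.ext; push_cast
    rw [hbv 1, hbv 0, hv1, hv0, hii]
  have hb12 : bO 1 * bO 2 = bO 3 := by
    apply Subtype.ext; push_cast
    rw [hbv 1, hbv 2, hbv 3, hv1, hv2, hv3]
  have hb13 : bO 1 * bO 3 = -bO 2 := by
    apply Subtype.ext; push_cast
    rw [hbv 1, hbv 3, hbv 2, hv1, hv3, hv2]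
    linear_combination ω * hii
  have hb22 : bO 2 * bO 2 = bO 0 + bO 2 := by
    apply Subtype.ext; push_cast
    rw [hbv 2, hbv 0, hv2, hv0, hω2]
  have hb23 : bO 2 * bO 3 = bO 1 + bO 3 := by
    apply Subtype.ext; push_cast
    rw [hbv 2, hbv 3, hbv 1, hv2, hv3, hv1]
    linear_combination i * hω2
  have hb33 : bO 3 * bO 3 = -bO 0 - bO 2 := by
    apply Subtype.ext; push_cast
    rw [hbv 3, hbv 0, hbv 2, hv3, hv0, hv2]
    linear_combination (ω * ω) * hii - hω2
  -- σO on basis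
  have hσb0 : σO (bO 0) = bO 0 := by rw [hb0]; exact map_one σO
  have hσb1 : σO (bO 1) = bO 1 := by
    apply Subtype.ext; rw [hσO, hbv 1, hv1, hσi]
  have h2K : σ (2 : K) = 2 := by
    have h : ((2 : ℚ) : K) = (2 : K) := by norm_num
    rw [← h, hσQ]
  have hσω : σ ω = 1 - ω := by
    rw [← hω, map_div₀, map_add, map_one, hσ5, h2K]
    ring
  have hσb2 : σO (bO 2) = bO 0 - bO 2 := by
    apply Subtype.ext; push_cast
    rw [hσO, hbv 2, hbv 0, hv2, hv0, hσω]
  have hσb3 : σO (bO 3) = bO 1 - bO 3 := by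
    apply Subtype.ext; push_cast
    rw [hσO, hbv 3, hbv 1, hv3, hv1, map_mul, hσi, hσω]
    ring
  -- iO and p in terms of basis
  have hiObO : iO = bO 1 := by apply Subtype.ext; rw [hiO, hbv 1, hv1]
  have hpbO : p = bO 0 + bO 1 := by
    apply Subtype.ext; push_cast; rw [hp, hbv 0, hbv 1, hv0, hv1]
  -- the additive map φ
  set φA : O →+ M2 :=
    { toFun := fun k => (((BO.repr k) 0 + (BO.repr k) 1 : ℤ) : ZMod 2) • (1 : M2)
        + (((BO.repr k) 2 + (BO.repr k) 3 : ℤ) : ZMod 2) • Wm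
      map_zero' := by simp
      map_add' := by
        intro x y
        simp only [map_add, Finsupp.add_apply, Int.cast_add, add_smul]
        abel } with hφA
  have hφap : ∀ k : O, φA k = (((BO.repr k) 0 + (BO.repr k) 1 : ℤ) : ZMod 2) • (1 : M2)
        + (((BO.repr k) 2 + (BO.repr k) 3 : ℤ) : ZMod 2) • Wm := fun k => rfl
  have hφsmul : ∀ (t : ℤ) (x : O), φA (t • x) = (t : ZMod 2) • φA x := by
    intro t x
    rw [hφap, hφap]
    simp only [map_smul, Finsupp.smul_apply, smul_eq_mul, ← mul_add, Int.cast_mul, mul_smul,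
      smul_add]
  have hext : ∀ (g h : O →+ M2), (∀ j, g (bO j) = h (bO j)) → ∀ x, g x = h x := by
    intro g h hgh x
    obtain ⟨c, hc⟩ : ∃ c : Fin 4 → ℤ, ∑ j, c j • BO j = x := ⟨fun j => BO.repr x j, BO.sum_repr x⟩
    rw [← hc, map_sum, map_sum]
    apply Finset.sum_congr rfl
    intro j _
    rw [map_zsmul, map_zsmul, hBOa, hgh j]
  -- φ on basis
  have hφ0 : φA (bO 0) = 1 := by
    rw [hφap, hrepr 0]
    simp [Finsupp.single_apply]
  have hφ1 : φA (bO 1) = 1 := by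
    rw [hφap, hrepr 1]
    simp [Finsupp.single_apply]
  have hφ2 : φA (bO 2) = Wm := by
    rw [hφap, hrepr 2]
    simp [Finsupp.single_apply]
  have hφ3 : φA (bO 3) = Wm := by
    rw [hφap, hrepr 3]
    simp [Finsupp.single_apply]
  have hφone : φA (1 : O) = 1 := by rw [← hb0, hφ0]
  have hkey : ∀ j k : Fin 4, φA (bO j * bO k) = φA (bO j) * φA (bO k) := by
    intro j k
    fin_cases j <;> fin_cases k
    · show φA (bO 0 * bO 0) = φA (bO 0) * φA (bO 0)
      rw [hb0, one_mul, hφone, one_mul]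
    · show φA (bO 0 * bO 1) = φA (bO 0) * φA (bO 1)
      rw [hb0, one_mul, hφone, one_mul]
    · show φA (bO 0 * bO 2) = φA (bO 0) * φA (bO 2)
      rw [hb0, one_mul, hφone, one_mul]
    · show φA (bO 0 * bO 3) = φA (bO 0) * φA (bO 3)
      rw [hb0, one_mul, hφone, one_mul]
    · show φA (bO 1 * bO 0) = φA (bO 1) * φA (bO 0)
      rw [hb0, mul_one, hφone, mul_one]
    · show φA (bO 1 * bO 1) = φA (bO 1) * φA (bO 1)
      rw [hb11, map_neg, hφ0, hφ1]; decide
    · show φA (bO 1 * bO 2) = φA (bO 1) * φA (bO 2)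
      rw [hb12, hφ3, hφ1, hφ2, one_mul]
    · show φA (bO 1 * bO 3) = φA (bO 1) * φA (bO 3)
      rw [hb13, map_neg, hφ2, hφ1, hφ3]; decide
    · show φA (bO 2 * bO 0) = φA (bO 2) * φA (bO 0)
      rw [hb0, mul_one, hφone, mul_one]
    · show φA (bO 2 * bO 1) = φA (bO 2) * φA (bO 1)
      rw [show bO 2 * bO 1 = bO 3 from by rw [mul_comm]; exact hb12, hφ3, hφ2, hφ1, mul_one]
    · show φA (bO 2 * bO 2) = φA (bO 2) * φA (bO 2)
      rw [hb22, map_add, hφ0, hφ2]; decide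
    · show φA (bO 2 * bO 3) = φA (bO 2) * φA (bO 3)
      rw [hb23, map_add, hφ1, hφ3, hφ2]; decide
    · show φA (bO 3 * bO 0) = φA (bO 3) * φA (bO 0)
      rw [hb0, mul_one, hφone, mul_one]
    · show φA (bO 3 * bO 1) = φA (bO 3) * φA (bO 1)
      rw [show bO 3 * bO 1 = -bO 2 from by rw [mul_comm]; exact hb13, map_neg, hφ2, hφ3, hφ1]
      decide
    · show φA (bO 3 * bO 2) = φA (bO 3) * φA (bO 2)
      rw [show bO 3 * bO 2 = bO 1 + bO 3 from by rw [mul_comm]; exact hb23, map_add, hφ1, hφ3,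
        hφ2]
      decide
    · show φA (bO 3 * bO 3) = φA (bO 3) * φA (bO 3)
      rw [hb33, map_sub, map_neg, hφ0, hφ2, hφ3]; decide
  have hφmulb : ∀ (j : Fin 4) (x : O), φA (bO j * x) = φA (bO j) * φA x := by
    intro j
    apply hext (φA.comp (AddMonoidHom.mulLeft (bO j)))
      ((AddMonoidHom.mulLeft (φA (bO j))).comp φA)
    intro k
    simp only [AddMonoidHom.coe_comp, AddMonoidHom.coe_mulLeft, Function.comp_apply]
    exact hkey j k
  have hφmul : ∀ x y : O, φA (x * y) = φA x * φA y := by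
    intro x y
    refine hext (φA.comp (AddMonoidHom.mulRight y)) ((AddMonoidHom.mulRight (φA y)).comp φA) ?_ x
    intro j
    simp only [AddMonoidHom.coe_comp, AddMonoidHom.coe_mulRight, Function.comp_apply]
    exact hφmulb j y
  have hσbb : ∀ j : Fin 4, φA (σO (bO j)) = Fm * φA (bO j) * Fm := by
    intro j
    fin_cases j
    · show φA (σO (bO 0)) = Fm * φA (bO 0) * Fm
      rw [hσb0, hφ0]; decide
    · show φA (σO (bO 1)) = Fm * φA (bO 1) * Fm
      rw [hσb1, hφ1]; decide
    · show φA (σO (bO 2)) = Fm * φA (bO 2) * Fm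
      rw [hσb2, map_sub, hφ0, hφ2]; decide
    · show φA (σO (bO 3)) = Fm * φA (bO 3) * Fm
      rw [hσb3, map_sub, hφ1, hφ3]; decide
  have hφσ : ∀ x : O, φA (σO x) = Fm * φA x * Fm := by
    refine hext (φA.comp σO.toAddMonoidHom)
      ((AddMonoidHom.mk' (fun X : M2 => Fm * X * Fm) (by intro a b; noncomm_ring)).comp φA) ?_
    intro j
    simp only [AddMonoidHom.coe_comp, Function.comp_apply, AddMonoidHom.mk'_apply,
      RingHom.toAddMonoidHom_eq_coe, AddMonoidHom.coe_coe]
    exact hσbb j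
  have hφiO : φA iO = 1 := by rw [hiObO, hφ1]
  have hφp : φA p = 0 := by rw [hpbO, map_add, hφ0, hφ1]; decide
  have hφsurj : ∀ t u : ZMod 2, ∃ k : O, φA k = t • (1 : M2) + u • Wm := by
    intro t u
    refine ⟨(t.val : ℤ) • (1 : O) + (u.val : ℤ) • bO 2, ?_⟩
    rw [map_add, hφsmul, hφsmul, hφone, hφ2, val_intCast, val_intCast]
  have hkera : ∀ k : O, φA k = 0 → ∃ m : O, k = p * m := by
    intro k hk
    rw [hφap] at hk
    obtain ⟨h01, h23⟩ := coeff_zero _ _ hk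
    rw [ZMod.intCast_zmod_eq_zero_iff_dvd] at h01 h23
    obtain ⟨m, hm'⟩ : ∃ m : ℤ, (BO.repr k) 0 - (BO.repr k) 1 = 2 * m := by
      obtain ⟨c, hc⟩ := h01; exact ⟨(BO.repr k) 0 - c, by omega⟩
    obtain ⟨n', hn'⟩ : ∃ n : ℤ, (BO.repr k) 2 - (BO.repr k) 3 = 2 * n := by
      obtain ⟨c, hc⟩ := h23; exact ⟨(BO.repr k) 2 - c, by omega⟩
    refine ⟨((BO.repr k) 1 + m) • (1 : O) - m • bO 1 + ((BO.repr k) 3 + n') • bO 2 - n' • bO 3,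
      ?_⟩
    apply Subtype.ext
    have hkK : (k : K) = ((BO.repr k) 0 : ℤ) • (1 : K) + ((BO.repr k) 1 : ℤ) • i
        + ((BO.repr k) 2 : ℤ) • ω + ((BO.repr k) 3 : ℤ) • (i * ω) := by
      conv_lhs => rw [← BO.sum_repr k]
      push_cast [Fin.sum_univ_four]
      rw [hBOa, hBOa, hBOa, hBOa, hbv 0, hbv 1, hbv 2, hbv 3, hv0, hv1, hv2, hv3]
    have e0 : (((BO.repr k) 0 : ℤ) : K) = (((BO.repr k) 1 : ℤ) : K) + 2 * (m : K) := by
      have := congrArg (fun t : ℤ => (t : K)) hm'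
      push_cast at this
      linear_combination this
    have e2 : (((BO.repr k) 2 : ℤ) : K) = (((BO.repr k) 3 : ℤ) : K) + 2 * (n' : K) := by
      have := congrArg (fun t : ℤ => (t : K)) hn'
      push_cast at this
      linear_combination this
    rw [hkK]
    push_cast
    rw [hbv 1, hbv 2, hbv 3, hv1, hv2, hv3, hp]
    simp only [zsmul_eq_mul]
    push_cast
    linear_combination e0 + ω * e2 + ((m : K) + (n' : K) * ω) * hii
  -- Λ side
  choose cf hc1 hc2 using hfree
  set ψ : Λ → M2 := fun a => φA (cf a 0) + φA (cf a 1) * Fm with hψ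
  have hψval : ∀ k0 k1 : O, ψ (ι k0 + ι k1 * z) = φA k0 + φA k1 * Fm := by
    intro k0 k1
    have h := hc2 (ι k0 + ι k1 * z) ![k0, k1] rfl
    have h0 : cf (ι k0 + ι k1 * z) 0 = k0 := by rw [← h]; rfl
    have h1 : cf (ι k0 + ι k1 * z) 1 = k1 := by rw [← h]; rfl
    rw [hψ]
    simp only
    rw [h0, h1]
  have hψι : ∀ k : O, ψ (ι k) = φA k := by
    intro k
    have : ι k = ι k + ι 0 * z := by rw [map_zero, zero_mul, add_zero]
    rw [this, hψval, map_zero, zero_mul, add_zero]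
  have hψ1 : ψ 1 = 1 := by
    have : (1 : Λ) = ι 1 := (map_one ι).symm
    rw [this, hψι, hφone]
  have hψadd : ∀ a b : Λ, ψ (a + b) = ψ a + ψ b := by
    intro a b
    have hab : a + b = ι (cf a 0 + cf b 0) + ι (cf a 1 + cf b 1) * z := by
      conv_lhs => rw [hc1 a, hc1 b]
      rw [map_add, map_add, add_mul]
      abel
    rw [hab, hψval, map_add, map_add, add_mul, hψ]
    simp only
    abel
  have hψmul : ∀ a b : Λ, ψ (a * b) = ψ a * ψ b := by
    intro a b
    have t3 : z * z = ι iO := by rw [← hz2, sq]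
    have q1 : ι (cf a 1) * z * ι (cf b 0) = ι (cf a 1) * ι (σO (cf b 0)) * z := by
      rw [mul_assoc, hcomm, ← mul_assoc]
    have q2 : ι (cf a 1) * z * (ι (cf b 1) * z)
        = ι (cf a 1) * ι (σO (cf b 1)) * ι iO := by
      calc ι (cf a 1) * z * (ι (cf b 1) * z)
          = ι (cf a 1) * (z * ι (cf b 1)) * z := by noncomm_ring
        _ = ι (cf a 1) * (ι (σO (cf b 1)) * z) * z := by rw [hcomm]
        _ = ι (cf a 1) * ι (σO (cf b 1)) * (z * z) := by noncomm_ring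
        _ = ι (cf a 1) * ι (σO (cf b 1)) * ι iO := by rw [t3]
    have key : a * b = ι (cf a 0 * cf b 0 + cf a 1 * (σO (cf b 1) * iO)) +
        ι (cf a 0 * cf b 1 + cf a 1 * σO (cf b 0)) * z := by
      conv_lhs => rw [hc1 a, hc1 b]
      rw [add_mul, mul_add, mul_add, q1, q2]
      rw [map_add, map_add, map_mul, map_mul, map_mul, map_mul, map_mul]
      noncomm_ring
    rw [key, hψval, hψ]
    simp only
    simp only [map_add, hφmul, hφσ, hφiO, mul_one]
    exact mat_identity Fm _ _ _ _ FmFm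
  have hψsurj : ∀ m : M2, ∃ a : Λ, ψ a = m := by
    intro m
    obtain ⟨x, y, u, vv, hm⟩ := m2_decomp m
    obtain ⟨k0, hk0⟩ := hφsurj x y
    obtain ⟨k1, hk1⟩ := hφsurj u vv
    exact ⟨ι k0 + ι k1 * z, by rw [hψval, hk0, hk1, hm]⟩
  -- the two-sided ideal
  set I : TwoSidedIdeal Λ := TwoSidedIdeal.span {ι p} with hI
  have hpI : ι p ∈ I := TwoSidedIdeal.subset_span rfl
  have hkerψ : ∀ a : Λ, ψ a = 0 → a ∈ I := by
    intro a ha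
    rw [hψ] at ha
    simp only at ha
    rw [hφap (cf a 0), hφap (cf a 1)] at ha
    obtain ⟨h0, h1⟩ := ker_split _ _ _ _ ha
    obtain ⟨m0, hm0⟩ := hkera _ ((hφap (cf a 0)).trans h0)
    obtain ⟨m1, hm1⟩ := hkera _ ((hφap (cf a 1)).trans h1)
    have : a = ι p * ι m0 + ι p * (ι m1 * z) := by
      conv_lhs => rw [hc1 a]
      rw [hm0, hm1, map_mul, map_mul, mul_assoc]
    rw [this]
    exact I.add_mem (I.mul_mem_right _ _ hpI) (I.mul_mem_right _ _ hpI)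
  have hψp : ψ (ι p) = 0 := by rw [hψι, hφp]
  -- bundle ψ as a ring hom
  set Ψ : Λ →+* M2 :=
    { toFun := ψ
      map_one' := hψ1
      map_mul' := hψmul
      map_zero' := by
        show ψ 0 = 0
        have : (0 : Λ) = ι 0 := (map_zero ι).symm
        rw [this, hψι, map_zero]
      map_add' := hψadd } with hΨ
  have hspanker : ∀ a : Λ, a ∈ I → ψ a = 0 := by
    intro a ha
    have : a ∈ TwoSidedIdeal.ker Ψ := by
      refine TwoSidedIdeal.mem_span_iff.mp ha (TwoSidedIdeal.ker Ψ) ?_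
      intro t ht
      rw [Set.mem_singleton_iff] at ht
      subst ht
      exact (TwoSidedIdeal.mem_ker Ψ).mpr hψp
    exact (TwoSidedIdeal.mem_ker Ψ).mp this
  -- the quotient map
  have hresp : ∀ a b : Λ, I.ringCon a b → ψ a = ψ b := by
    intro a b hab
    have hmem : a - b ∈ I := (TwoSidedIdeal.rel_iff I a b).mp hab
    have h0 : ψ (a - b) = 0 := hspanker _ hmem
    have hsub : ψ (a - b) = ψ a - ψ b := map_sub Ψ a b
    rw [hsub] at h0
    linear_combination (norm := abel) h0
  set F0 : I.ringCon.Quotient →+* M2 :=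
    { toFun := fun x => Quotient.liftOn' x ψ hresp
      map_one' := by
        show ψ 1 = 1
        exact hψ1
      map_mul' := fun x y => Quotient.inductionOn₂' x y (fun a b => hψmul a b)
      map_zero' := by
        show ψ 0 = 0
        exact map_zero Ψ
      map_add' := fun x y => Quotient.inductionOn₂' x y (fun a b => hψadd a b) } with hF0
  have hF0c : ∀ a : Λ, F0 (a : I.ringCon.Quotient) = ψ a := fun a => rfl
  have hinj : Function.Injective F0 := by
    rw [injective_iff_map_eq_zero]
    intro x
    refine Quotient.inductionOn' x ?_
    intro a ha
    have ha' : ψ a = 0 := ha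
    have hmem : a ∈ I := hkerψ a ha'
    have : I.ringCon a 0 := (TwoSidedIdeal.rel_iff I a 0).mpr (by rwa [sub_zero])
    exact Quotient.sound' this
  have hsurj : Function.Surjective F0 := by
    intro m
    obtain ⟨a, ha⟩ := hψsurj m
    exact ⟨(a : I.ringCon.Quotient), ha⟩
  exact ⟨RingEquiv.ofBijective F0 ⟨hinj, hsurj⟩⟩
end

section
/- The cyclic algebra (ℚ(i,√5)/ℚ(i), σ, 1+i) is a division algebra. -/
lemma zmod5_aux : ∀ u v : ZMod 5, u^2 = 2*v^2 → u = 0 ∧ v = 0 := by decide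

lemma int_step (A B C D : ℤ) (h : A^2 - 2*B^2 = 5*(C^2 - 2*D^2)) :
    (5:ℤ) ∣ A ∧ (5:ℤ) ∣ B := by
  have h50 : (5 : ZMod 5) = 0 := by decide
  have h5 : ((A:ZMod 5))^2 = 2*(B:ZMod 5)^2 := by
    have hc := congrArg (fun t : ℤ => (t : ZMod 5)) h
    push_cast at hc
    linear_combination hc + ((C:ZMod 5)^2 - 2*(D:ZMod 5)^2) * h50
  obtain ⟨hA, hB⟩ := zmod5_aux _ _ h5
  exact ⟨(ZMod.intCast_zmod_eq_zero_iff_dvd A 5).1 hA,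
         (ZMod.intCast_zmod_eq_zero_iff_dvd B 5).1 hB⟩

lemma int_desc : ∀ n : ℕ, ∀ A B C D : ℤ,
    A.natAbs + B.natAbs + C.natAbs + D.natAbs ≤ n →
    A^2 - 2*B^2 = 5*(C^2 - 2*D^2) → A = 0 ∧ B = 0 ∧ C = 0 ∧ D = 0 := by
  intro n
  induction n using Nat.strong_induction_on with
  | _ n ih =>
    intro A B C D hsum heq
    obtain ⟨a, rfl⟩ := (int_step A B C D heq).1
    obtain ⟨b, rfl⟩ := (int_step (5*a) B C D heq).2
    have heq2 : C^2 - 2*D^2 = 5*(a^2 - 2*b^2) := by linarith [heq]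
    obtain ⟨c, rfl⟩ := (int_step C D a b heq2).1
    obtain ⟨d, rfl⟩ := (int_step (5*c) D a b heq2).2
    have heq3 : a^2 - 2*b^2 = 5*(c^2 - 2*d^2) := by linarith [heq2]
    have e1 : (5*a).natAbs = 5 * a.natAbs := by simp [Int.natAbs_mul]
    have e2 : (5*b).natAbs = 5 * b.natAbs := by simp [Int.natAbs_mul]
    have e3 : (5*c).natAbs = 5 * c.natAbs := by simp [Int.natAbs_mul]
    have e4 : (5*d).natAbs = 5 * d.natAbs := by simp [Int.natAbs_mul]
    have key : a = 0 ∧ b = 0 ∧ c = 0 ∧ d = 0 := by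
      by_cases h0 : a.natAbs + b.natAbs + c.natAbs + d.natAbs = 0
      · refine ⟨?_, ?_, ?_, ?_⟩ <;> rw [← Int.natAbs_eq_zero] <;> omega
      · exact ih (a.natAbs + b.natAbs + c.natAbs + d.natAbs) (by omega) a b c d le_rfl heq3
    exact ⟨by rw [key.1]; ring, by rw [key.2.1]; ring,
           by rw [key.2.2.1]; ring, by rw [key.2.2.2]; ring⟩

lemma int_no_sol (A B C D : ℤ) (h : A^2 - 2*B^2 = 5*(C^2 - 2*D^2)) :
    A = 0 ∧ B = 0 ∧ C = 0 ∧ D = 0 :=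
  int_desc _ A B C D le_rfl h

lemma rat_mul_den (x : ℚ) : x * (x.den : ℚ) = (x.num : ℚ) := Rat.mul_den_eq_num x

lemma rat_no_sol : ¬ ∃ p q r s : ℚ,
    p^2 - q^2 - 5*r^2 + 5*s^2 = 1 ∧ 2*p*q - 10*r*s = 1 := by
  rintro ⟨p, q, r, s, h1, h2⟩
  set a := p - q with hadef
  set b := q with hbdef
  set c := r - s with hcdef
  set d := s with hddef
  have hq : a^2 - 2*b^2 = 5*(c^2 - 2*d^2) := by
    simp only [hadef, hbdef, hcdef, hddef]
    linear_combination h1 - h2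
  set n : ℤ := (a.den : ℤ) * b.den * c.den * d.den with hndef
  have hn0 : (n:ℚ) ≠ 0 := by
    positivity
  have habs : ∀ x : ℚ, (x.den:ℤ) ∣ n → ∃ X : ℤ, (X:ℚ) = x * (n:ℚ) := by
    intro x ⟨k, hk⟩
    refine ⟨x.num * k, ?_⟩
    push_cast [hk]
    rw [← mul_assoc, ← rat_mul_den x]
  obtain ⟨A, hA⟩ := habs a ⟨(b.den:ℤ)*c.den*d.den, by ring⟩
  obtain ⟨B, hB⟩ := habs b ⟨(a.den:ℤ)*c.den*d.den, by ring⟩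
  obtain ⟨C, hC⟩ := habs c ⟨(a.den:ℤ)*b.den*d.den, by ring⟩
  obtain ⟨D, hD⟩ := habs d ⟨(a.den:ℤ)*b.den*c.den, by ring⟩
  have hZ : A^2 - 2*B^2 = 5*(C^2 - 2*D^2) := by
    have : (A:ℚ)^2 - 2*(B:ℚ)^2 = 5*((C:ℚ)^2 - 2*(D:ℚ)^2) := by
      rw [hA, hB, hC, hD]
      linear_combination ((n:ℚ))^2 * hq
    exact_mod_cast this
  obtain ⟨hA0, hB0, hC0, hD0⟩ := int_no_sol A B C D hZ
  rw [hA0] at hA; rw [hB0] at hB; rw [hC0] at hC; rw [hD0] at hD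
  have ha0 : a = 0 := by
    have := hA.symm
    push_cast at this
    rcases mul_eq_zero.1 this with h | h
    · exact h
    · exact absurd h hn0
  have hb0 : b = 0 := by
    have := hB.symm
    push_cast at this
    rcases mul_eq_zero.1 this with h | h
    · exact h
    · exact absurd h hn0
  have hc0 : c = 0 := by
    have := hC.symm
    push_cast at this
    rcases mul_eq_zero.1 this with h | h
    · exact h
    · exact absurd h hn0
  have hd0 : d = 0 := by
    have := hD.symm
    push_cast at this
    rcases mul_eq_zero.1 this with h | h
    · exact h
    · exact absurd h hn0
  have hp : p = 0 := by
    have hb' : q = 0 := hb0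
    have ha' : p - q = 0 := ha0
    linarith
  have hr : r = 0 := by
    have hd' : s = 0 := hd0
    have hc' : r - s = 0 := hc0
    linarith
  rw [hp, hr] at h2
  norm_num at h2

/-- The cyclic algebra `(ℚ(i,√5)/ℚ(i), σ, 1+i)` (with `σ` the nontrivial
`ℚ(i)`-automorphism of `ℚ(i,√5)`) is a division algebra: every nonzero element is
invertible. -/
theorem stmt_15
    -- `K = ℚ(i, √5)`
    (K : Type*) [Field K] [Algebra ℚ K]
    (i sq5 : K) (hi : i ^ 2 = -1) (h5 : sq5 ^ 2 = 5)
    (hgen : Algebra.adjoin ℚ ({i, sq5} : Set K) = ⊤)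
    -- `σ` is the nontrivial automorphism of `K/ℚ(i)`
    (σ : K ≃+* K) (hσi : σ i = i) (hσ5 : σ sq5 = -sq5)
    -- the cyclic algebra `A = (K/ℚ(i), σ, 1+i) = K ⊕ K z`, `z² = 1 + i`
    (A : Type*) [Ring A] (ι : K →+* A) (z : A)
    (hcomm : ∀ x : K, z * ι x = ι (σ x) * z)
    (hz2 : z ^ 2 = ι (1 + i))
    (hfree : ∀ a : A, ∃! c : Fin 2 → K, a = ι (c 0) + ι (c 1) * z) :
    ∀ a : A, a ≠ 0 → IsUnit a := by
  classical
  haveI : CharZero K := charZero_of_injective_algebraMap (algebraMap ℚ K).injective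
  have hcast : ∀ q : ℚ, algebraMap ℚ K q = (q : K) := fun q => eq_ratCast _ q
  have hσQ : ∀ q : ℚ, σ (q : K) = (q : K) := fun q => map_ratCast σ q
  -- the predicate "lies in ℚ(i)"
  let P : K → Prop := fun t => ∃ p q : ℚ, t = (p:K) + (q:K) * i
  have Prat : ∀ q : ℚ, P ((q:K)) := fun q => ⟨q, 0, by push_cast; ring⟩
  have P0 : P (0:K) := ⟨0, 0, by push_cast; ring⟩
  have P1 : P (1:K) := ⟨1, 0, by push_cast; ring⟩
  have P5 : P (5:K) := ⟨5, 0, by push_cast; ring⟩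
  have Pi' : P i := ⟨0, 1, by push_cast; ring⟩
  have Padd : ∀ {s t : K}, P s → P t → P (s + t) := by
    rintro s t ⟨p, q, rfl⟩ ⟨r, u, rfl⟩
    exact ⟨p + r, q + u, by push_cast; ring⟩
  have Pneg : ∀ {t : K}, P t → P (-t) := by
    rintro t ⟨p, q, rfl⟩
    exact ⟨-p, -q, by push_cast; ring⟩
  have Pmul : ∀ {s t : K}, P s → P t → P (s * t) := by
    rintro s t ⟨p, q, rfl⟩ ⟨r, u, rfl⟩
    exact ⟨p*r - q*u, p*u + q*r, by push_cast; linear_combination ((q:K)*(u:K))*hi⟩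
  have PσFix : ∀ {t : K}, P t → σ t = t := by
    rintro t ⟨p, q, rfl⟩
    rw [map_add, map_mul, hσQ, hσQ, hσi]
  -- decomposition of K
  have hdec : ∀ x : K, ∃ a b : K, P a ∧ P b ∧ x = a + b * sq5 := by
    have hT : (⊤ : Subalgebra ℚ K) ≤
        { carrier := {t : K | ∃ a b : K, P a ∧ P b ∧ t = a + b * sq5}
          mul_mem' := by
            rintro x y ⟨a, b, ha, hb, rfl⟩ ⟨c, d, hc, hd, rfl⟩
            exact ⟨a*c + 5*(b*d), a*d + b*c,
              Padd (Pmul ha hc) (Pmul P5 (Pmul hb hd)),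
              Padd (Pmul ha hd) (Pmul hb hc),
              by linear_combination (b*d) * h5⟩
          one_mem' := ⟨1, 0, P1, P0, by ring⟩
          add_mem' := by
            rintro x y ⟨a, b, ha, hb, rfl⟩ ⟨c, d, hc, hd, rfl⟩
            exact ⟨a + c, b + d, Padd ha hc, Padd hb hd, by ring⟩
          zero_mem' := ⟨0, 0, P0, P0, by ring⟩
          algebraMap_mem' := fun r =>
            ⟨(r:K), 0, Prat r, P0, by rw [hcast]; ring⟩ } := by
      rw [← hgen]
      apply Algebra.adjoin_le
      intro t ht
      simp only [Set.mem_insert_iff, Set.mem_singleton_iff] at ht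
      rcases ht with rfl | rfl
      · exact ⟨t, 0, Pi', P0, by ring⟩
      · exact ⟨0, 1, P0, P1, by ring⟩
    intro x
    exact hT (by trivial)
  -- independence of 1, i over ℚ
  have hind : ∀ p q : ℚ, (p:K) + (q:K)*i = 0 → p = 0 ∧ q = 0 := by
    intro p q h
    by_cases hq : q = 0
    · refine ⟨?_, hq⟩
      rw [hq] at h
      push_cast at h
      have : (p:K) = 0 := by linear_combination h
      exact_mod_cast this
    · exfalso
      have hqK : (q:K) ≠ 0 := by exact_mod_cast hq
      have hiK : i = ((-p/q : ℚ) : K) := by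
        push_cast
        rw [eq_div_iff hqK]
        linear_combination h
      have h2 : ((-p/q : ℚ):K)^2 = -1 := by rw [← hiK]; exact hi
      have h3 : ((-p/q)^2 : ℚ) = -1 := by exact_mod_cast h2
      nlinarith [sq_nonneg (-p/q)]
  have hind2 : ∀ X Y : ℚ, (X:K) + (Y:K)*i = 1 + i → X = 1 ∧ Y = 1 := by
    intro X Y h
    have h' := hind (X-1) (Y-1) (by push_cast; linear_combination h)
    constructor <;> linarith [h'.1, h'.2]
  -- conjugation formula
  have hσ5' : ∀ a b : K, P a → P b → σ (a + b*sq5) = a - b*sq5 := by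
    intro a b ha hb
    rw [map_add, map_mul, PσFix ha, PσFix hb, hσ5]
    ring
  have hσσ : ∀ t : K, σ (σ t) = t := by
    intro t
    obtain ⟨a, b, ha, hb, rfl⟩ := hdec t
    rw [hσ5' a b ha hb, show a - b*sq5 = a + (-b)*sq5 by ring,
        hσ5' a (-b) ha (Pneg hb)]
    ring
  -- 1+i is not a norm
  have hnoW : ∀ w : K, w * σ w ≠ 1 + i := by
    intro w hw
    obtain ⟨a, b, ha, hb, rfl⟩ := hdec w
    rw [hσ5' a b ha hb] at hw
    obtain ⟨p, q, rfl⟩ := ha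
    obtain ⟨r, s, rfl⟩ := hb
    have key : ((p^2 - q^2 - 5*r^2 + 5*s^2 : ℚ):K)
        + ((2*p*q - 10*r*s : ℚ):K) * i = 1 + i := by
      push_cast
      linear_combination hw + (-(q:K)^2 + 5*(s:K)^2) * hi + ((r:K)+(s:K)*i)^2 * h5
    obtain ⟨k1, k2⟩ := hind2 _ _ key
    exact rat_no_sol ⟨p, q, r, s, k1, k2⟩
  -- main argument
  intro a ha
  obtain ⟨c, hc, -⟩ := hfree a
  set x := c 0 with hx
  set y := c 1 with hy
  have hσx0 : ∀ t : K, t ≠ 0 → σ t ≠ 0 := by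
    intro t ht h0
    exact ht (by rw [← hσσ t, h0, map_zero])
  set N := x * σ x - (1+i) * (y * σ y) with hNdef
  have hσN : σ N = N := by
    rw [hNdef]
    simp only [map_sub, map_mul, map_add, map_one, hσi, hσσ]
    ring
  have hN : N ≠ 0 := by
    intro h0
    rw [hNdef] at h0
    by_cases hy0 : y = 0
    · have hx0 : x ≠ 0 := by
        intro hx0
        apply ha
        rw [hc, hx0, hy0, map_zero, zero_mul, add_zero]
      exact (mul_ne_zero hx0 (hσx0 x hx0))
        (by rw [hy0] at h0; linear_combination h0)
    · apply hnoW (x * y⁻¹)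
      have hσy : σ y ≠ 0 := hσx0 y hy0
      rw [map_mul, map_inv₀]
      field_simp
      linear_combination h0
  have hσNi : σ N⁻¹ = N⁻¹ := by rw [map_inv₀, hσN]
  have hprod : ∀ x1 y1 x2 y2 : K, (ι x1 + ι y1 * z) * (ι x2 + ι y2 * z)
      = ι (x1*x2 + y1 * σ y2 * (1+i)) + ι (x1*y2 + y1 * σ x2) * z := by
    intro x1 y1 x2 y2
    have e1 : ι x1 * ι x2 = ι (x1*x2) := (map_mul ι x1 x2).symm
    have e2 : (ι y1 * z) * ι x2 = ι (y1 * σ x2) * z := by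
      rw [mul_assoc, hcomm, ← mul_assoc, ← map_mul]
    have e3 : ι x1 * (ι y2 * z) = ι (x1*y2) * z := by
      rw [← mul_assoc, ← map_mul]
    have e4 : (ι y1 * z) * (ι y2 * z) = ι (y1 * σ y2 * (1+i)) := by
      rw [mul_assoc, ← mul_assoc z, hcomm, mul_assoc, ← pow_two, hz2,
        ← map_mul, ← map_mul, mul_assoc]
    rw [mul_add, add_mul, add_mul, e1, e2, e3, e4, map_add, map_add, add_mul]
    abel
  set u := N⁻¹ * σ x with hu
  set v := -(N⁻¹ * y) with hv
  have hσu : σ u = N⁻¹ * x := by rw [hu, map_mul, hσNi, hσσ]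
  have hσv : σ v = -(N⁻¹ * σ y) := by rw [hv, map_neg, map_mul, hσNi]
  set b : A := ι u + ι v * z with hb
  have h1 : a * b = 1 := by
    rw [hc, hb, hprod]
    have c1 : x * u + y * σ v * (1+i) = 1 := by
      rw [hσv, hu]
      calc x * (N⁻¹ * σ x) + y * -(N⁻¹ * σ y) * (1+i)
          = N⁻¹ * (x * σ x - (1+i) * (y * σ y)) := by ring
        _ = N⁻¹ * N := by rw [← hNdef]
        _ = 1 := inv_mul_cancel₀ hN
    have c2 : x * v + y * σ u = 0 := by
      rw [hσu, hv]
      ring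
    rw [c1, c2, map_one, map_zero, zero_mul, add_zero]
  have h2 : b * a = 1 := by
    rw [hc, hb, hprod]
    have c1 : u * x + v * σ y * (1+i) = 1 := by
      rw [hu, hv]
      calc N⁻¹ * σ x * x + -(N⁻¹ * y) * σ y * (1+i)
          = N⁻¹ * (x * σ x - (1+i) * (y * σ y)) := by ring
        _ = N⁻¹ * N := by rw [← hNdef]
        _ = 1 := inv_mul_cancel₀ hN
    have c2 : u * y + v * σ x = 0 := by
      rw [hu, hv]
      ring
    rw [c1, c2, map_one, map_zero, zero_mul, add_zero]
  exact ⟨⟨a, b, h1, h2⟩, rfl⟩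
end
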